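/- A maximal ideal M of C(X) is countable strongly annihilated if and only if M is both a z°-ideal and a real maximal ideal. -/

import Mathlib

/-!
Let `𝓕` be the filter on `X` generated by the zero sets `Z(f)`, `f ∈ M`. Testing strong
annihilation against `b = 1` shows that countably many members of `M` have a common zero, and
testing it against a single `f ∈ M` shows that `M` is a `z°`-ideal, because `c * f = 0` puts the
open set `{c ≠ 0}` inside `int Z(f)`. As `M` is maximal, for every `f` and `s` either `f ≤ s` or
`s < f` holds `𝓕`-eventually; with the countable intersection property this makes every `f`
converge along `𝓕`, and taking the limit is a ring homomorphism onto `ℝ` with kernel `M`.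

Conversely, if `C(X)/M ≅ ℝ` then a function tending to `0` along `𝓕` lies in `M`, so
`G = ∑ 2⁻ⁿ min(|aₙ|, 1)` lies in `M` for `aₙ ∈ M`, and `Z(G) ⊆ ⋂ Z(aₙ)`. Since `M` is a
`z°`-ideal, `int Z(G) ⊄ Z(b)` for `b ∉ M` (otherwise `G² + b² ∈ M`), and a bump function supported
in `int Z(G)` that does not vanish at a point where `b ≠ 0` annihilates every `aₙ` but not `b`.
-/

open ContinuousMap Filter Topology

def CountableStronglyAnnihilated {R : Type*} [CommRing R] (I : Ideal R) : Prop :=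
  ∀ S : Set R, S.Countable → S ⊆ I → ∀ b ∉ I, ∃ c : R, (∀ a ∈ S, c * a = 0) ∧ c * b ≠ 0

def Filter.CountableIntersectionProperty {α : Type*} (F : Filter α) : Prop :=
  ∀ s : ℕ → Set α, (∀ n, s n ∈ F) → (⋂ n, s n).Nonempty

theorem Filter.tendsto_limsup_of_forall_eventually_le_or_lt {α : Type*} {F : Filter α} [F.NeBot]
    (hF : F.CountableIntersectionProperty) {f : α → ℝ}
    (hf : ∀ s, (∀ᶠ x in F, f x ≤ s) ∨ ∀ᶠ x in F, s < f x) :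
    Tendsto f F (𝓝 (limsup f F)) := by
  have lt_of_frequently (s : ℝ) (h : ∃ᶠ x in F, s < f x) : ∀ᶠ x in F, s < f x :=
    (hf s).resolve_left fun h' => h (h'.mono fun _ => not_lt.2)
  have bdd_above : ∃ n : ℕ, ∀ᶠ x in F, f x ≤ n := by
    by_contra h
    simp only [not_exists] at h
    obtain ⟨x, hx⟩ := hF (fun n : ℕ => {x | (n : ℝ) < f x}) fun n => (hf n).resolve_left (h n)
    obtain ⟨n, hn⟩ := exists_nat_ge (f x)
    have hxn : (n : ℝ) < f x := Set.mem_iInter.1 hx n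
    linarith
  have bdd_below : ∃ n : ℕ, ∀ᶠ x in F, -(n : ℝ) < f x := by
    by_contra h
    simp only [not_exists] at h
    obtain ⟨x, hx⟩ := hF (fun n : ℕ => {x | f x ≤ -(n : ℝ)}) fun n => (hf _).resolve_right (h n)
    obtain ⟨n, hn⟩ := exists_nat_gt (-f x)
    have hxn : f x ≤ -(n : ℝ) := Set.mem_iInter.1 hx n
    linarith
  obtain ⟨m, hm⟩ := bdd_above
  obtain ⟨n, hn⟩ := bdd_below
  have cobdd : F.IsCoboundedUnder (· ≤ ·) f :=
    isCoboundedUnder_le_of_eventually_le F (hn.mono fun _ => le_of_lt)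
  exact tendsto_order.2 ⟨fun a ha => lt_of_frequently a (frequently_lt_of_lt_limsup cobdd ha),
    fun b hb => eventually_lt_of_limsup_lt hb ⟨m, hm⟩⟩

theorem Ideal.IsMaximal.nonempty_quotient_ringEquiv {R S : Type*} [CommRing R] [Semiring S]
    [Nontrivial S] {M : Ideal R} (hM : M.IsMaximal) {φ : R →+* S} (hφ : Function.Surjective φ)
    (hle : M ≤ RingHom.ker φ) : Nonempty ((R ⧸ M) ≃+* S) :=
  ⟨(Ideal.quotEquivOfEq (hM.eq_of_le (RingHom.ker_ne_top φ) hle)).trans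
    (RingHom.quotientKerEquivOfSurjective hφ)⟩

theorem Ideal.exists_sub_algebraMap_mem_of_ringEquiv {A : Type*} [CommRing A] [Algebra ℝ A]
    {M : Ideal A} (e : (A ⧸ M) ≃+* ℝ) (a : A) : ∃ r : ℝ, a - algebraMap ℝ A r ∈ M := by
  have he : (e : A ⧸ M →+* ℝ).comp (algebraMap ℝ (A ⧸ M)) = RingHom.id ℝ := Subsingleton.elim _ _
  refine ⟨e (Ideal.Quotient.mk M a), Ideal.Quotient.eq.1 (e.injective ?_)⟩
  rw [Ideal.Quotient.mk_algebraMap]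
  exact (RingHom.congr_fun he _).symm

namespace ContinuousMap

variable {X : Type*} [TopologicalSpace X]

theorem apply_eq_zero_of_mul_eq_zero {c f : C(X, ℝ)} (h : c * f = 0) {x : X} (hx : c x ≠ 0) :
    f x = 0 :=
  (mul_eq_zero.1 (by simpa using DFunLike.congr_fun h x)).resolve_left hx

def zeroSetFilter (I : Ideal C(X, ℝ)) : Filter X where
  sets := {s | ∃ f ∈ I, {x | f x = 0} ⊆ s}
  univ_sets := ⟨0, I.zero_mem, Set.subset_univ _⟩
  sets_of_superset := fun ⟨f, hf, hfs⟩ hst => ⟨f, hf, hfs.trans hst⟩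
  inter_sets := fun ⟨f, hf, hfs⟩ ⟨g, hg, hgt⟩ =>
    ⟨f * f + g * g, I.add_mem (I.mul_mem_left f hf) (I.mul_mem_left g hg), fun x hx => by
      obtain ⟨hfx, hgx⟩ := mul_self_add_mul_self_eq_zero.1 (by simpa using hx)
      exact ⟨hfs hfx, hgt hgx⟩⟩

variable {I M : Ideal C(X, ℝ)}

theorem eventually_eq_zero_of_mem {f : C(X, ℝ)} (hf : f ∈ I) : ∀ᶠ x in zeroSetFilter I, f x = 0 :=
  ⟨f, hf, subset_rfl⟩

theorem zeroSetFilter_neBot (hI : I ≠ ⊤) : (zeroSetFilter I).NeBot := by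
  refine forall_mem_nonempty_iff_neBot.1 fun s ⟨f, hf, hfs⟩ => ?_
  by_contra! h
  refine hI (I.eq_top_of_isUnit_mem hf ((isUnit_iff_forall_ne_zero f).2 fun x hx => ?_))
  exact h.subset (hfs hx)

theorem eventually_ne_zero_of_notMem (hM : M.IsMaximal) {g : C(X, ℝ)} (hg : g ∉ M) :
    ∀ᶠ x in zeroSetFilter M, g x ≠ 0 := by
  obtain ⟨y, i, hi, hyi⟩ := hM.exists_inv hg
  refine (eventually_eq_zero_of_mem hi).mono fun x hix hgx => ?_
  simpa [hix, hgx] using DFunLike.congr_fun hyi x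

theorem eventually_le_or_eventually_lt (hM : M.IsMaximal) (f : C(X, ℝ)) (s : ℝ) :
    (∀ᶠ x in zeroSetFilter M, f x ≤ s) ∨ ∀ᶠ x in zeroSetFilter M, s < f x := by
  let g : C(X, ℝ) := ⟨fun x => max (f x - s) 0, by fun_prop⟩
  by_cases hg : g ∈ M
  · exact .inl ((eventually_eq_zero_of_mem hg).mono fun x hx => by simpa [g] using hx)
  · exact .inr ((eventually_ne_zero_of_notMem hM hg).mono fun x hx => by simpa [g] using hx)

noncomputable def limUnderRingHom (F : Filter X) [F.NeBot]
    (hF : ∀ f : C(X, ℝ), ∃ r, Tendsto f F (𝓝 r)) : C(X, ℝ) →+* ℝ where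
  toFun f := limUnder F f
  map_one' := tendsto_const_nhds.limUnder_eq
  map_mul' f g := ((tendsto_nhds_limUnder (hF f)).mul (tendsto_nhds_limUnder (hF g))).limUnder_eq
  map_zero' := tendsto_const_nhds.limUnder_eq
  map_add' f g := ((tendsto_nhds_limUnder (hF f)).add (tendsto_nhds_limUnder (hF g))).limUnder_eq

theorem _root_.CountableStronglyAnnihilated.countableIntersectionProperty (hM : M ≠ ⊤)
    (h : CountableStronglyAnnihilated M) : (zeroSetFilter M).CountableIntersectionProperty := by
  intro s hs
  choose m hm hms using hs
  obtain ⟨c, hc, hc1⟩ := h (Set.range m) (Set.countable_range m) (Set.range_subset_iff.2 hm) 1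
    ((Ideal.ne_top_iff_one M).1 hM)
  obtain ⟨x, hx⟩ := DFunLike.ne_iff.1 (by simpa using hc1)
  exact ⟨x, Set.mem_iInter.2 fun n => hms n (apply_eq_zero_of_mul_eq_zero (hc _ ⟨n, rfl⟩) hx)⟩

theorem nonempty_quotient_ringEquiv_real_of_countableIntersectionProperty (hM : M.IsMaximal)
    (hF : (zeroSetFilter M).CountableIntersectionProperty) : Nonempty ((C(X, ℝ) ⧸ M) ≃+* ℝ) := by
  have := zeroSetFilter_neBot hM.ne_top
  have hlim (f : C(X, ℝ)) : ∃ r, Tendsto f (zeroSetFilter M) (𝓝 r) :=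
    ⟨_, tendsto_limsup_of_forall_eventually_le_or_lt hF (eventually_le_or_eventually_lt hM f)⟩
  refine hM.nonempty_quotient_ringEquiv (φ := limUnderRingHom _ hlim)
    (fun r => ⟨const X r, tendsto_const_nhds.limUnder_eq⟩) fun f hf => ?_
  exact (tendsto_const_nhds.congr'
    ((eventually_eq_zero_of_mem hf).mono fun _ h => h.symm)).limUnder_eq

def IsZCircIdeal (M : Ideal C(X, ℝ)) : Prop :=
  ∀ f ∈ M, ∀ g : C(X, ℝ), interior {x | f x = 0} = interior {x | g x = 0} → g ∈ M

theorem _root_.CountableStronglyAnnihilated.isZCircIdeal (h : CountableStronglyAnnihilated M) :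
    IsZCircIdeal M := by
  intro f hf g hfg
  by_contra hg
  obtain ⟨c, hc, hcg⟩ := h {f} (Set.countable_singleton f) (Set.singleton_subset_iff.2 hf) g hg
  have hcoz : Function.support c ⊆ interior {y | f y = 0} :=
    interior_maximal (fun y hy => apply_eq_zero_of_mul_eq_zero (hc f rfl) hy)
      (isOpen_ne_fun c.continuous continuous_const)
  refine hcg (ext fun x => ?_)
  simp only [mul_apply, zero_apply, mul_eq_zero, or_iff_not_imp_left]
  intro hx
  have hx' : x ∈ interior {y | g y = 0} := hfg ▸ hcoz hx
  exact interior_subset (s := {y | g y = 0}) hx'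

theorem mem_of_tendsto_zero (hM : M ≠ ⊤) (e : (C(X, ℝ) ⧸ M) ≃+* ℝ) {g : C(X, ℝ)}
    (hg : Tendsto g (zeroSetFilter M) (𝓝 0)) : g ∈ M := by
  have := zeroSetFilter_neBot hM
  obtain ⟨r, hr⟩ := Ideal.exists_sub_algebraMap_mem_of_ringEquiv e g
  have hgr : Tendsto g (zeroSetFilter M) (𝓝 r) :=
    tendsto_const_nhds.congr' ((eventually_eq_zero_of_mem hr).mono fun x hx =>
      (sub_eq_zero.1 (by simpa using hx)).symm)
  simpa [tendsto_nhds_unique hgr hg] using hr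

theorem exists_mem_forall_apply_eq_zero_of_apply_eq_zero (hM : M ≠ ⊤) (e : (C(X, ℝ) ⧸ M) ≃+* ℝ)
    (a : ℕ → C(X, ℝ)) (ha : ∀ n, a n ∈ M) : ∃ G ∈ M, ∀ x, G x = 0 → ∀ n, a n x = 0 := by
  let t : X → ℕ → ℝ := fun x n => (2⁻¹ : ℝ) ^ n * min |a n x| 1
  have ht_nonneg (x n) : 0 ≤ t x n := by positivity
  have ht_le (x n) : ‖t x n‖ ≤ (2⁻¹ : ℝ) ^ n := by
    rw [Real.norm_of_nonneg (ht_nonneg x n)]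
    exact mul_le_of_le_one_right (by positivity) (min_le_right _ _)
  have hsum : Summable fun n : ℕ => (2⁻¹ : ℝ) ^ n :=
    summable_geometric_of_lt_one (by norm_num) (by norm_num)
  let G : C(X, ℝ) :=
    ⟨fun x => ∑' n, t x n, continuous_tsum (by fun_prop) hsum fun n x => ht_le x n⟩
  refine ⟨G, mem_of_tendsto_zero hM e ?_, fun x hx n => ?_⟩
  · have hterm (n : ℕ) : Tendsto (t · n) (zeroSetFilter M) (𝓝 0) :=
      tendsto_const_nhds.congr'
        ((eventually_eq_zero_of_mem (ha n)).mono fun x hx => by simp [t, hx])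
    have := tendsto_tsum_of_dominated_convergence hsum hterm (.of_forall ht_le)
    rwa [tsum_zero] at this
  · have ht_summable : Summable (t x) := hsum.of_norm_bounded (ht_le x)
    have htx : t x n = 0 :=
      congr_fun ((hasSum_zero_iff_of_nonneg (ht_nonneg x)).1 (ht_summable.hasSum_iff.2 hx)) n
    have hmin : min |a n x| 1 = 0 := by simpa [t] using htx
    exact abs_eq_zero.1 ((min_eq_iff.1 hmin).resolve_right fun h => one_ne_zero h.1).1

theorem exists_mem_interior_zero_ne_zero (hM : M.IsPrime) (hz : IsZCircIdeal M) {G b : C(X, ℝ)}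
    (hG : G ∈ M) (hb : b ∉ M) : ∃ x ∈ interior {x | G x = 0}, b x ≠ 0 := by
  by_contra! h
  have hzero : {x | (G * G + b * b) x = 0} = {x | G x = 0} ∩ {x | b x = 0} := by
    ext x
    simp [mul_self_add_mul_self_eq_zero]
  have hk : G * G + b * b ∈ M := hz G hG _ (by
    rw [hzero, interior_inter, eq_comm, Set.inter_eq_left]
    exact interior_maximal h isOpen_interior)
  have hbb : b * b ∈ M := by simpa using M.sub_mem hk (M.mul_mem_left G hG)
  exact (hM.mem_or_mem hbb).elim hb hb

theorem exists_apply_ne_zero_support_subset [CompletelyRegularSpace X] {U : Set X} {x : X}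
    (hU : IsOpen U) (hx : x ∈ U) : ∃ c : C(X, ℝ), c x ≠ 0 ∧ Function.support c ⊆ U := by
  obtain ⟨f, hf, hfx, hfU⟩ := CompletelyRegularSpace.completely_regular_isOpen x U hU hx
  refine ⟨⟨fun y => 1 - f y, by fun_prop⟩, by simp [hfx], fun y hy => ?_⟩
  by_contra hyU
  exact hy (by simp [hfU hyU])

theorem countableStronglyAnnihilated_of_isZCircIdeal [CompletelyRegularSpace X]
    (hM : M.IsMaximal) (hz : IsZCircIdeal M) (e : (C(X, ℝ) ⧸ M) ≃+* ℝ) :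
    CountableStronglyAnnihilated M := by
  intro S hS hSM b hb
  obtain ⟨a, ha⟩ := (hS.insert 0).exists_eq_range (Set.insert_nonempty 0 S)
  have haM (n : ℕ) : a n ∈ M := Set.insert_subset M.zero_mem hSM (ha ▸ Set.mem_range_self n)
  obtain ⟨G, hGM, hGa⟩ := exists_mem_forall_apply_eq_zero_of_apply_eq_zero hM.ne_top e a haM
  obtain ⟨x, hxG, hbx⟩ := exists_mem_interior_zero_ne_zero hM.isPrime hz hGM hb
  obtain ⟨c, hcx, hc⟩ := exists_apply_ne_zero_support_subset isOpen_interior hxG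
  refine ⟨c, fun s hs => ext fun y => ?_, fun h => ?_⟩
  · obtain ⟨n, rfl⟩ : s ∈ Set.range a := ha ▸ Set.mem_insert_of_mem 0 hs
    by_cases hy : c y = 0
    · simp [hy]
    · simp [hGa y (interior_subset (s := {x | G x = 0}) (hc hy)) n]
  · exact mul_ne_zero hcx hbx (by simpa using DFunLike.congr_fun h x)

end ContinuousMap

theorem stmt15 {X : Type*} [TopologicalSpace X] [CompletelyRegularSpace X]
    (M : Ideal C(X, ℝ)) (hM : M.IsMaximal) :
    CountableStronglyAnnihilated M ↔
      ((∀ f ∈ M, ∀ g : C(X, ℝ),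
          interior {x | f x = 0} = interior {x | g x = 0} → g ∈ M) ∧
        Nonempty ((C(X, ℝ) ⧸ M) ≃+* ℝ)) :=
  ⟨fun h => ⟨h.isZCircIdeal, nonempty_quotient_ringEquiv_real_of_countableIntersectionProperty hM
      (h.countableIntersectionProperty hM.ne_top)⟩,
    fun ⟨hz, ⟨e⟩⟩ => countableStronglyAnnihilated_of_isZCircIdeal hM hz e⟩
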